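/- Let Ω be a finite set and A ⊆ Ωᵏ with |A| ≤ ε·|Ω|ᵏ for some ε ∈ [0,1]. For each j ∈ [m], let σ_{1j},…,σ_{kj} be independent uniformly random permutations of Ω (independent across j). Then for any fixed functions E_{ij} : 𝒲 → Ω and any fixed w ∈ 𝒲 with the property that for each j, the tuple (σ_{1j}(E_{1j}(w)),…,σ_{kj}(E_{kj}(w))) is uniformly distributed on Ωᵏ, the probability that more than 2εm indices j satisfy (σ_{1j}(E_{1j}(w)),…,σ_{kj}(E_{kj}(w))) ∈ A is at most 2^{−εm/2}. Consequently, by averaging over a finite message set 𝒲, there exists a fixed choice of permutations {σ_{ij}} such that for a uniformly random message w ∈ 𝒲, the probability that more than 2εm indices j land in A is at most 2^{−εm/2}. -/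

import Mathlib

/-!
Weight each outcome by `2 ^ (number of bad sessions)`. Since the sessions are independent, the
total weight factors over the sessions, and a session whose bad event has density at most `ε`
contributes a factor at most `(1 + ε) N ≤ 2 ^ (3ε/2) N`, where `N` is the number of choices per
session. Markov's inequality at the threshold `2 ^ (2εm)` then leaves the fraction
`2 ^ (3εm/2 - 2εm) = 2 ^ (-εm/2)`. Uniformity of the permuted codewords turns
`|A| ≤ ε |Ω|ᵏ` into density at most `ε` for each session, and double counting the pairs
(permutations, message) yields a single good choice of permutations.
-/

open Finset

theorem one_add_le_two_rpow {ε : ℝ} (hε : 0 ≤ ε) : 1 + ε ≤ (2 : ℝ) ^ (3 * ε / 2) :=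
  calc 1 + ε ≤ Real.exp ε := by linarith [Real.add_one_le_exp ε]
    _ ≤ Real.exp (Real.log 2 * (3 * ε / 2)) :=
      Real.exp_le_exp.mpr (by nlinarith [Real.log_two_gt_d9])
    _ = 2 ^ (3 * ε / 2) := (Real.rpow_def_of_pos two_pos _).symm

theorem card_filter_lt_mul_two_rpow_le_sum {α : Type*} [Fintype α] (f : α → ℕ) (a : ℝ) :
    ((univ.filter fun x => a < f x).card : ℝ) * 2 ^ a ≤ ∑ x, (2 : ℝ) ^ f x :=
  calc ((univ.filter fun x => a < f x).card : ℝ) * 2 ^ a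
      = ∑ _x ∈ univ.filter fun x => a < f x, (2 : ℝ) ^ a := by rw [sum_const, nsmul_eq_mul]
    _ ≤ ∑ x ∈ univ.filter fun x => a < f x, (2 : ℝ) ^ f x := sum_le_sum fun x hx => by
      rw [← Real.rpow_natCast]
      exact Real.rpow_le_rpow_of_exponent_le one_le_two (mem_filter.mp hx).2.le
    _ ≤ ∑ x, (2 : ℝ) ^ f x :=
      sum_le_sum_of_subset_of_nonneg (subset_univ _) fun _ _ _ => by positivity

theorem sum_ite_two_one_eq {T : Type*} [Fintype T] (p : T → Prop) [DecidablePred p] :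
    ∑ t, (if p t then (2 : ℝ) else 1) = Fintype.card T + (univ.filter p).card := by
  have hsplit := card_filter_add_card_filter_not (s := (univ : Finset T)) p
  rw [card_univ] at hsplit
  simp only [sum_ite, sum_const, nsmul_eq_mul, mul_one, ← hsplit]
  push_cast
  ring

section

variable {ι T : Type*} [Fintype ι] [DecidableEq ι] [Fintype T]

theorem sum_two_pow_card_filter_eq_prod (p : ι → T → Prop) [∀ j, DecidablePred (p j)] :
    ∑ σ : ι → T, (2 : ℝ) ^ (univ.filter fun j => p j (σ j)).card
      = ∏ j, (Fintype.card T + (univ.filter (p j)).card : ℝ) := by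
  simp only [← sum_ite_two_one_eq, Fintype.prod_sum, prod_ite, prod_const_one, mul_one,
    prod_const]

theorem chernoff_card_filter_le {ε : ℝ} (hε : 0 ≤ ε)
    (p : ι → T → Prop) [∀ j, DecidablePred (p j)]
    (hp : ∀ j, ((univ.filter (p j)).card : ℝ) ≤ ε * Fintype.card T) :
    ((univ.filter fun σ : ι → T =>
        2 * ε * Fintype.card ι < ((univ.filter fun j => p j (σ j)).card : ℝ)).card : ℝ)
      ≤ 2 ^ (-(ε * Fintype.card ι) / 2) * Fintype.card (ι → T) := by
  set m : ℕ := Fintype.card ι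
  set N : ℝ := (Fintype.card T : ℝ)
  have hweight : ∑ σ : ι → T, (2 : ℝ) ^ (univ.filter fun j => p j (σ j)).card
      ≤ 2 ^ (-(ε * m) / 2) * N ^ m * 2 ^ (2 * ε * m) :=
    calc ∑ σ : ι → T, (2 : ℝ) ^ (univ.filter fun j => p j (σ j)).card
        = ∏ j, (N + (univ.filter (p j)).card : ℝ) := sum_two_pow_card_filter_eq_prod p
      _ ≤ ∏ _j : ι, (1 + ε) * N :=
        prod_le_prod (fun _ _ => by positivity) fun j _ => by linarith [hp j]
      _ = (1 + ε) ^ m * N ^ m := by rw [prod_const, card_univ, mul_pow]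
      _ ≤ (2 ^ (3 * ε / 2)) ^ m * N ^ m := by
        gcongr; exact one_add_le_two_rpow hε
      _ = 2 ^ (-(ε * m) / 2) * N ^ m * 2 ^ (2 * ε * m) := by
        rw [← Real.rpow_mul_natCast zero_le_two, mul_right_comm,
          ← Real.rpow_add two_pos]
        ring_nf
  rw [Fintype.card_fun]
  push_cast
  exact le_of_mul_le_mul_right ((card_filter_lt_mul_two_rpow_le_sum _ _).trans hweight)
    (by positivity)

end

theorem card_filter_mem_le_of_card_fiber_eq {α β : Type*} [Fintype α] [DecidableEq β]
    (f : α → β) (A : Finset β) {c ε : ℝ} (hε : 0 ≤ ε) (hc : 0 ≤ c)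
    (hA : (A.card : ℝ) ≤ ε * c)
    (hf : ∀ b, ((univ.filter fun x => f x = b).card : ℝ) = Fintype.card α / c) :
    ((univ.filter fun x => f x ∈ A).card : ℝ) ≤ ε * Fintype.card α := by
  have hfiber : ((univ.filter fun x => f x ∈ A).card : ℝ)
      = ∑ b ∈ A, ((univ.filter fun x => f x = b).card : ℝ) := by
    rw [← sum_card_fiberwise_eq_card_filter]
    push_cast
    rfl
  calc ((univ.filter fun x => f x ∈ A).card : ℝ)
      = A.card * (Fintype.card α / c) := by rw [hfiber, sum_congr rfl fun b _ => hf b,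
        sum_const, nsmul_eq_mul]
    _ ≤ ε * c * (Fintype.card α / c) := by gcongr
    _ = ε * Fintype.card α * (c / c) := by ring
    _ ≤ ε * Fintype.card α := mul_le_of_le_one_right (by positivity) (div_self_le_one c)

theorem exists_card_filter_le_of_forall_card_filter_le {α β : Type*} [Fintype α] [Nonempty α]
    [Fintype β] (P : α → β → Prop) [∀ a b, Decidable (P a b)] {C : ℝ}
    (h : ∀ b, ((univ.filter fun a => P a b).card : ℝ) ≤ C * Fintype.card α) :
    ∃ a, ((univ.filter fun b => P a b).card : ℝ) ≤ C * Fintype.card β := by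
  have hsum : ∑ a : α, ((univ.filter fun b => P a b).card : ℝ) ≤ ∑ _a : α, C * Fintype.card β :=
    calc ∑ a : α, ((univ.filter fun b => P a b).card : ℝ)
        = ∑ b : β, ((univ.filter fun a => P a b).card : ℝ) := by
          simp only [card_filter]; push_cast; exact sum_comm
      _ ≤ ∑ _b : β, C * Fintype.card α := sum_le_sum fun b _ => h b
      _ = ∑ _a : α, C * Fintype.card β := by simp only [sum_const, card_univ, nsmul_eq_mul]; ring
  obtain ⟨a, -, ha⟩ := exists_le_of_sum_le univ_nonempty hsum
  exact ⟨a, ha⟩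

theorem permutation_derandomization_general {Ω W : Type*} [Fintype Ω] [DecidableEq Ω]
    [Fintype W]
    (k m : ℕ)
    (A : Finset (Fin k → Ω)) (ε : ℝ) (hε0 : 0 ≤ ε)
    (hA : (A.card : ℝ) ≤ ε * (Fintype.card Ω : ℝ) ^ k)
    (E : Fin k → Fin m → W → Ω)
    (hunif : ∀ w : W, ∀ j : Fin m, ∀ a : Fin k → Ω,
      ((univ.filter fun τ : Fin k → Equiv.Perm Ω =>
          (fun i => τ i (E i j w)) = a).card : ℝ)
        = (Fintype.card (Fin k → Equiv.Perm Ω) : ℝ) / (Fintype.card Ω : ℝ) ^ k) :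
    (∀ w : W,
      ((univ.filter fun σ : Fin m → Fin k → Equiv.Perm Ω =>
          2 * ε * m < ((univ.filter fun j : Fin m =>
            (fun i => σ j i (E i j w)) ∈ A).card : ℝ)).card : ℝ)
        ≤ (2 : ℝ) ^ (-(ε * m) / 2)
            * (Fintype.card (Fin m → Fin k → Equiv.Perm Ω) : ℝ)) ∧
    (∃ σ : Fin m → Fin k → Equiv.Perm Ω,
      ((univ.filter fun w : W =>
          2 * ε * m < ((univ.filter fun j : Fin m =>
            (fun i => σ j i (E i j w)) ∈ A).card : ℝ)).card : ℝ)
        ≤ (2 : ℝ) ^ (-(ε * m) / 2) * (Fintype.card W : ℝ)) := by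
  have hbad : ∀ w j, ((univ.filter fun τ : Fin k → Equiv.Perm Ω =>
      (fun i => τ i (E i j w)) ∈ A).card : ℝ) ≤ ε * Fintype.card (Fin k → Equiv.Perm Ω) :=
    fun w j => card_filter_mem_le_of_card_fiber_eq _ A hε0 (by positivity) hA (hunif w j)
  have hfew : ∀ w : W,
      ((univ.filter fun σ : Fin m → Fin k → Equiv.Perm Ω =>
          2 * ε * m < ((univ.filter fun j : Fin m =>
            (fun i => σ j i (E i j w)) ∈ A).card : ℝ)).card : ℝ)
        ≤ (2 : ℝ) ^ (-(ε * m) / 2) * (Fintype.card (Fin m → Fin k → Equiv.Perm Ω) : ℝ) :=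
    fun w => by
      simpa only [Fintype.card_fin] using chernoff_card_filter_le hε0
        (fun j (τ : Fin k → Equiv.Perm Ω) => (fun i => τ i (E i j w)) ∈ A) (hbad w)
  exact ⟨hfew, exists_card_filter_le_of_forall_card_filter_le _ hfew⟩

/-- Derandomization/averaging step: with independent uniform permutations applied
coordinatewise, for each fixed message `w` whose permuted encoding tuples are
uniform on `Ωᵏ` and a bad set `A` of density at most `ε`, the fraction of
permutation tuples for which more than `2εm` sessions land in `A` is at most
`2^{−εm/2}`; hence there is a fixed choice of permutations such that, for a
uniformly random message, the fraction of bad messages is at most `2^{−εm/2}`. -/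
theorem permutation_derandomization {Ω W : Type*} [Fintype Ω] [DecidableEq Ω]
    [Nonempty Ω] [Fintype W] [Nonempty W]
    (k m : ℕ) (hm : 0 < m) (hk : 0 < k)
    (A : Finset (Fin k → Ω)) (ε : ℝ) (hε0 : 0 ≤ ε) (hε1 : ε ≤ 1)
    (hA : (A.card : ℝ) ≤ ε * (Fintype.card Ω : ℝ) ^ k)
    (E : Fin k → Fin m → W → Ω)
    (hunif : ∀ w : W, ∀ j : Fin m, ∀ a : Fin k → Ω,
      ((univ.filter fun τ : Fin k → Equiv.Perm Ω =>
          (fun i => τ i (E i j w)) = a).card : ℝ)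
        = (Fintype.card (Fin k → Equiv.Perm Ω) : ℝ) / (Fintype.card Ω : ℝ) ^ k) :
    (∀ w : W,
      ((univ.filter fun σ : Fin m → Fin k → Equiv.Perm Ω =>
          2 * ε * m < ((univ.filter fun j : Fin m =>
            (fun i => σ j i (E i j w)) ∈ A).card : ℝ)).card : ℝ)
        ≤ (2 : ℝ) ^ (-(ε * m) / 2)
            * (Fintype.card (Fin m → Fin k → Equiv.Perm Ω) : ℝ)) ∧
    (∃ σ : Fin m → Fin k → Equiv.Perm Ω,
      ((univ.filter fun w : W =>
          2 * ε * m < ((univ.filter fun j : Fin m =>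
            (fun i => σ j i (E i j w)) ∈ A).card : ℝ)).card : ℝ)
        ≤ (2 : ℝ) ^ (-(ε * m) / 2) * (Fintype.card W : ℝ)) :=
  permutation_derandomization_general k m A ε hε0 hA E hunif
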